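/- arXiv:2205.06838 — 2 statements merged into one kernel-verified Lean document; each statement's English description precedes it below -/
import Mathlib

section
/- Let X be a Banach space with Markushevich basis that is C_g-suppression unconditional (‖P_A(x)‖ ≤ C_g‖x‖ and ‖x − P_A(x)‖ ≤ C_g‖x‖ for all finite A) and satisfies C_g-property (A) in the form: α‖1_{εD}‖ ≤ C_g · β‖1_{εE}‖ whenever D, E are disjoint finite sets with |D| ≤ |E|, signs ε_n = sgn(e_n^*(x)), and α ≤ β are the relevant coefficient levels. Then for every τ ∈ (0,1], every x ∈ X, every m ∈ ℕ, and every τ-weak greedy set B of x with |B| = m, one has ‖x − P_B(x)‖ ≤ (C_g⁴/τ + C_g)·σ_m(x), where σ_m(x) = inf{‖x − ∑_{n∈A} a_n e_n‖ : |A| ≤ m, scalars (a_n)}. -/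
/-!
Write `x - P_B x = (x - P_{A ∪ B} x) + P_{A \ B} x` and `y = x - ∑_{n ∈ A} a_n e_n`. The first
term equals `y - P_{A ∪ B} y`, hence has norm at most `C_g ‖y‖`. For the second, suppression
unconditionality lets one multiply coefficients by numbers in `[0, 1]` at cost `C_g`, since such a
multiplier lies in the convex hull of indicators of subsets. This flattens `P_{A \ B} x` up to
`max_{A \ B} |e_n^*(x)| · 1_{ε(A \ B)}` and `P_{B \ A} x` down to
`min_{B \ A} |e_n^*(x)| · 1_{ε(B \ A)}`; weak greediness compares the two levels up to `τ` and
property (A) the two sign vectors, giving `‖P_{A \ B} x‖ ≤ C_g³/τ ‖P_{B \ A} x‖`. Finally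
`P_{B \ A} x = P_{B \ A} y` has norm at most `C_g ‖y‖`.
-/

open Finset Pointwise

section ConvexHull

variable {ι E : Type*}

theorem sum_smul_mem_convexHull_subsetSums [AddCommGroup E] [Module ℝ E] [DecidableEq ι]
    (v : ι → E) (D : Finset ι) {t : ι → ℝ} (ht : ∀ n ∈ D, t n ∈ Set.Icc 0 1) :
    ∑ n ∈ D, t n • v n ∈ convexHull ℝ {w | ∃ S ⊆ D, ∑ n ∈ S, v n = w} := by
  induction D using Finset.induction_on with
  | empty => exact subset_convexHull ℝ _ ⟨∅, subset_rfl, rfl⟩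
  | @insert a D ha ih =>
    set K := {w | ∃ S ⊆ insert a D, ∑ n ∈ S, v n = w}
    have hKD : {w | ∃ S ⊆ D, ∑ n ∈ S, v n = w} ⊆ K := fun _ ⟨S, hS, hw⟩ =>
      ⟨S, hS.trans (subset_insert a D), hw⟩
    have hKa : v a +ᵥ {w | ∃ S ⊆ D, ∑ n ∈ S, v n = w} ⊆ K := by
      rintro _ ⟨_, ⟨S, hS, rfl⟩, rfl⟩
      exact ⟨insert a S, insert_subset_insert a hS, sum_insert fun h => ha (hS h)⟩
    have hw := ih fun n hn => ht n (mem_insert_of_mem hn)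
    have hw₀ : ∑ n ∈ D, t n • v n ∈ convexHull ℝ K := convexHull_mono hKD hw
    have hw₁ : v a + ∑ n ∈ D, t n • v n ∈ convexHull ℝ K :=
      convexHull_mono hKa (by rw [convexHull_vadd]; exact Set.vadd_mem_vadd_set hw)
    obtain ⟨hta₀, hta₁⟩ := ht a (mem_insert_self a D)
    -- `t a • v a + w` is the convex combination `(1 - t a) • w + t a • (v a + w)`
    convert (convex_convexHull ℝ K) hw₀ hw₁ (sub_nonneg.2 hta₁) hta₀ (by ring) using 1
    rw [sum_insert ha]
    module

theorem norm_sum_smul_le_of_forall_subset [SeminormedAddCommGroup E] [NormedSpace ℝ E]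
    {v : ι → E} {D : Finset ι} {t : ι → ℝ} {K : ℝ} (ht : ∀ n ∈ D, t n ∈ Set.Icc 0 1)
    (hK : ∀ S ⊆ D, ‖∑ n ∈ S, v n‖ ≤ K) : ‖∑ n ∈ D, t n • v n‖ ≤ K := by
  classical
  have hsub : {w | ∃ S ⊆ D, ∑ n ∈ S, v n = w} ⊆ Metric.closedBall 0 K := by
    rintro _ ⟨S, hS, rfl⟩
    exact mem_closedBall_zero_iff.2 (hK S hS)
  exact mem_closedBall_zero_iff.1 <|
    convexHull_min hsub (convex_closedBall 0 K) (sum_smul_mem_convexHull_subsetSums v D ht)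

end ConvexHull

theorem exists_abs_eq_one_mul_abs {ι : Type*} (c : ι → ℝ) :
    ∃ ε : ι → ℝ, (∀ n, |ε n| = 1) ∧ ∀ n, ε n * |c n| = c n := by
  refine ⟨fun n => if c n < 0 then -1 else 1, fun n => by dsimp only; split_ifs <;> simp,
    fun n => ?_⟩
  dsimp only
  split_ifs with h
  · rw [abs_of_neg h]; ring
  · rw [abs_of_nonneg (not_lt.1 h), one_mul]

section Biorthogonal

variable {ι X : Type*} [DecidableEq ι] [NormedAddCommGroup X] [NormedSpace ℝ X]
  {e : ι → X} {f : ι → X →L[ℝ] ℝ} {Cg : ℝ}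

theorem apply_sum_smul (hbi : ∀ i j, f i (e j) = if i = j then (1 : ℝ) else 0)
    (S : Finset ι) (c : ι → ℝ) (n : ι) :
    f n (∑ m ∈ S, c m • e m) = if n ∈ S then c n else 0 := by
  simp only [map_sum, map_smul, hbi, smul_eq_mul, mul_ite, mul_one, mul_zero, sum_ite_eq]

theorem sum_apply_sub_sum_smul_of_disjoint
    (hbi : ∀ i j, f i (e j) = if i = j then (1 : ℝ) else 0) {S A : Finset ι}
    (hSA : Disjoint S A) (x : X) (a : ι → ℝ) :
    ∑ n ∈ S, f n (x - ∑ m ∈ A, a m • e m) • e n = ∑ n ∈ S, f n x • e n :=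
  sum_congr rfl fun n hn => by
    rw [map_sub, apply_sum_smul hbi, if_neg (disjoint_left.1 hSA hn), sub_zero]

theorem sub_sum_apply_sub_sum_smul_of_subset
    (hbi : ∀ i j, f i (e j) = if i = j then (1 : ℝ) else 0) {S A : Finset ι}
    (hAS : A ⊆ S) (x : X) (a : ι → ℝ) :
    (x - ∑ m ∈ A, a m • e m) - ∑ n ∈ S, f n (x - ∑ m ∈ A, a m • e m) • e n =
      x - ∑ n ∈ S, f n x • e n := by
  simp only [map_sub, apply_sum_smul hbi, sub_smul, sum_sub_distrib, ite_smul, zero_smul,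
    sum_ite_mem, inter_eq_right.2 hAS]
  abel

theorem one_le_of_norm_sum_le (hbi : ∀ i j, f i (e j) = if i = j then (1 : ℝ) else 0)
    (hproj : ∀ (A : Finset ι) (x : X), ‖∑ n ∈ A, f n x • e n‖ ≤ Cg * ‖x‖) (i : ι) :
    1 ≤ Cg := by
  have he : 0 < ‖e i‖ := norm_pos_iff.2 fun h => by simpa [h] using hbi i i
  have h := hproj {i} (e i)
  rw [sum_singleton, hbi, if_pos rfl, one_smul] at h
  exact (le_mul_iff_one_le_left he).1 h

variable (hbi : ∀ i j, f i (e j) = if i = j then (1 : ℝ) else 0)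
  (hproj : ∀ (A : Finset ι) (x : X), ‖∑ n ∈ A, f n x • e n‖ ≤ Cg * ‖x‖)
include hbi hproj

theorem norm_sum_smul_le_of_subset {S D : Finset ι} (hSD : S ⊆ D) (c : ι → ℝ) :
    ‖∑ n ∈ S, c n • e n‖ ≤ Cg * ‖∑ n ∈ D, c n • e n‖ := by
  have h := hproj S (∑ n ∈ D, c n • e n)
  rwa [sum_congr rfl fun n hn => by rw [apply_sum_smul hbi, if_pos (hSD hn)]] at h

theorem norm_sum_mul_smul_le {D : Finset ι} {t : ι → ℝ} (ht : ∀ n ∈ D, t n ∈ Set.Icc 0 1)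
    (c : ι → ℝ) : ‖∑ n ∈ D, (t n * c n) • e n‖ ≤ Cg * ‖∑ n ∈ D, c n • e n‖ := by
  simp only [mul_smul]
  exact norm_sum_smul_le_of_forall_subset ht fun S hS =>
    norm_sum_smul_le_of_subset hbi hproj hS c

theorem norm_sum_smul_le_mul_norm_sum_sign {D : Finset ι} {c ε : ι → ℝ} {α : ℝ}
    (hε : ∀ n, ε n * |c n| = c n) (hα₀ : 0 ≤ α) (hα : ∀ n ∈ D, |c n| ≤ α) :
    ‖∑ n ∈ D, c n • e n‖ ≤ Cg * (α * ‖∑ n ∈ D, ε n • e n‖) := by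
  have ht : ∀ n ∈ D, |c n| / α ∈ Set.Icc 0 1 := fun n hn =>
    ⟨by positivity, div_le_one_of_le₀ (hα n hn) hα₀⟩
  have hc : ∀ n ∈ D, (|c n| / α * (α * ε n)) • e n = c n • e n := by
    intro n hn
    rcases hα₀.eq_or_lt with rfl | hα₀
    · simp [abs_nonpos_iff.1 (hα n hn)]
    · congr 1
      field_simp
      linear_combination hε n
  have h := norm_sum_mul_smul_le hbi hproj ht fun n => α * ε n
  simp_rw [sum_congr rfl hc, mul_smul, ← smul_sum, norm_smul, Real.norm_of_nonneg hα₀] at h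
  exact h

theorem mul_norm_sum_sign_le_norm_sum_smul {E : Finset ι} {c ε : ι → ℝ} {β : ℝ}
    (hε : ∀ n, ε n * |c n| = c n) (hβ₀ : 0 ≤ β) (hβ : ∀ n ∈ E, β ≤ |c n|) :
    β * ‖∑ n ∈ E, ε n • e n‖ ≤ Cg * ‖∑ n ∈ E, c n • e n‖ := by
  have ht : ∀ n ∈ E, β / |c n| ∈ Set.Icc 0 1 := fun n hn =>
    ⟨by positivity, div_le_one_of_le₀ (hβ n hn) (abs_nonneg _)⟩
  have hc : ∀ n ∈ E, (β / |c n| * c n) • e n = β • ε n • e n := by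
    intro n hn
    rw [smul_smul]
    rcases (abs_nonneg (c n)).eq_or_lt with h0 | h0
    · simp [le_antisymm (h0 ▸ hβ n hn) hβ₀]
    · congr 1
      field_simp
      linear_combination -β * hε n
  have h := norm_sum_mul_smul_le hbi hproj ht c
  rwa [sum_congr rfl hc, ← smul_sum, norm_smul, Real.norm_of_nonneg hβ₀] at h

theorem norm_sum_smul_le_of_propertyA (hCg : 0 ≤ Cg)
    (hA : ∀ (D E : Finset ι), Disjoint D E → D.card ≤ E.card →
      ∀ ε δ : ι → ℝ, (∀ n ∈ D, |ε n| = 1) → (∀ n ∈ E, |δ n| = 1) →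
      ∀ α β : ℝ, 0 ≤ α → α ≤ β →
      α * ‖∑ n ∈ D, ε n • e n‖ ≤ Cg * (β * ‖∑ n ∈ E, δ n • e n‖))
    {D E : Finset ι} (hDE : Disjoint D E) (hcard : #D ≤ #E) {τ : ℝ} (hτ : 0 < τ)
    (c : ι → ℝ) (hgreedy : ∀ i ∈ E, ∀ j ∈ D, τ * |c j| ≤ |c i|) :
    ‖∑ n ∈ D, c n • e n‖ ≤ Cg ^ 3 / τ * ‖∑ n ∈ E, c n • e n‖ := by
  rcases D.eq_empty_or_nonempty with rfl | hD
  · simp only [sum_empty, norm_zero]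
    positivity
  have hE : E.Nonempty := card_pos.1 (hcard.trans_lt' (card_pos.2 hD))
  obtain ⟨j, hj, hjmax⟩ := D.exists_max_image (fun n => |c n|) hD
  obtain ⟨i, hi, himin⟩ := E.exists_min_image (fun n => |c n|) hE
  obtain ⟨ε, hε1, hε⟩ := exists_abs_eq_one_mul_abs c
  calc ‖∑ n ∈ D, c n • e n‖
      ≤ Cg * (|c j| * ‖∑ n ∈ D, ε n • e n‖) :=
        norm_sum_smul_le_mul_norm_sum_sign hbi hproj hε (abs_nonneg _) hjmax
    _ = Cg / τ * (τ * |c j| * ‖∑ n ∈ D, ε n • e n‖) := by field_simp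
    _ ≤ Cg / τ * (Cg * (|c i| * ‖∑ n ∈ E, ε n • e n‖)) := by
        refine mul_le_mul_of_nonneg_left ?_ (by positivity)
        exact hA D E hDE hcard ε ε (fun n _ => hε1 n) (fun n _ => hε1 n) _ _
          (by positivity) (hgreedy i hi j hj)
    _ ≤ Cg / τ * (Cg * (Cg * ‖∑ n ∈ E, c n • e n‖)) := by
        refine mul_le_mul_of_nonneg_left (mul_le_mul_of_nonneg_left ?_ hCg) (by positivity)
        exact mul_norm_sum_sign_le_norm_sum_smul hbi hproj hε (abs_nonneg _) himin
    _ = Cg ^ 3 / τ * ‖∑ n ∈ E, c n • e n‖ := by ring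

end Biorthogonal

theorem stmt_18_general
    {X : Type*} [NormedAddCommGroup X] [NormedSpace ℝ X]
    (e : ℕ → X) (f : ℕ → X →L[ℝ] ℝ)
    (hbi : ∀ i j, f i (e j) = if i = j then (1 : ℝ) else 0)
    (Cg : ℝ)
    (hproj : ∀ (A : Finset ℕ) (x : X), ‖∑ n ∈ A, f n x • e n‖ ≤ Cg * ‖x‖)
    (hsupp : ∀ (A : Finset ℕ) (x : X),
      ‖x - ∑ n ∈ A, f n x • e n‖ ≤ Cg * ‖x‖)
    (hA : ∀ (D E : Finset ℕ), Disjoint D E → D.card ≤ E.card →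
      ∀ ε δ : ℕ → ℝ, (∀ n ∈ D, |ε n| = 1) → (∀ n ∈ E, |δ n| = 1) →
      ∀ α β : ℝ, 0 ≤ α → α ≤ β →
      α * ‖∑ n ∈ D, ε n • e n‖ ≤ Cg * (β * ‖∑ n ∈ E, δ n • e n‖)) :
    ∀ (τ : ℝ), 0 < τ → τ ≤ 1 →
      ∀ (x : X) (m : ℕ) (B : Finset ℕ), B.card = m →
      (∀ i ∈ B, ∀ j ∉ B, τ * |f j x| ≤ |f i x|) →
      ∀ (A : Finset ℕ) (a : ℕ → ℝ), A.card ≤ m →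
      ‖x - ∑ n ∈ B, f n x • e n‖
        ≤ (Cg ^ 4 / τ + Cg) * ‖x - ∑ n ∈ A, a n • e n‖ := by
  intro τ hτ _ x m B hB hgreedy A a hAm
  set y := x - ∑ n ∈ A, a n • e n
  have hCg : 0 ≤ Cg := zero_le_one.trans (one_le_of_norm_sum_le hbi hproj 0)
  have htail : ‖x - ∑ n ∈ A ∪ B, f n x • e n‖ ≤ Cg * ‖y‖ := by
    rw [← sub_sum_apply_sub_sum_smul_of_subset hbi subset_union_left]
    exact hsupp _ y
  have hhead : ‖∑ n ∈ A \ B, f n x • e n‖ ≤ Cg ^ 3 / τ * (Cg * ‖y‖) := by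
    refine (norm_sum_smul_le_of_propertyA hbi hproj hCg hA disjoint_sdiff_sdiff
      (card_sdiff_le_card_sdiff_iff.2 (hB ▸ hAm)) hτ _ fun i hi j hj =>
        hgreedy i (mem_sdiff.1 hi).1 j (mem_sdiff.1 hj).2).trans ?_
    rw [← sum_apply_sub_sum_smul_of_disjoint hbi sdiff_disjoint]
    gcongr
    exact hproj _ y
  have hsplit : x - ∑ n ∈ B, f n x • e n =
      (x - ∑ n ∈ A ∪ B, f n x • e n) + ∑ n ∈ A \ B, f n x • e n := by
    rw [← sum_sdiff (subset_union_right (s₁ := A)), union_sdiff_right]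
    abel
  calc ‖x - ∑ n ∈ B, f n x • e n‖
      ≤ ‖x - ∑ n ∈ A ∪ B, f n x • e n‖ + ‖∑ n ∈ A \ B, f n x • e n‖ := hsplit ▸ norm_add_le _ _
    _ ≤ Cg * ‖y‖ + Cg ^ 3 / τ * (Cg * ‖y‖) := add_le_add htail hhead
    _ = (Cg ^ 4 / τ + Cg) * ‖y‖ := by ring

/-- Theorem 6.5 (Konyagin–Temlyakov): a greedy basis
(suppression unconditional + property (A)) is
`(C_g⁴/τ + C_g, τ)`-greedy. -/
theorem stmt_18
    {X : Type*} [NormedAddCommGroup X] [NormedSpace ℝ X] [CompleteSpace X]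
    (e : ℕ → X) (f : ℕ → X →L[ℝ] ℝ)
    (hbi : ∀ i j, f i (e j) = if i = j then (1 : ℝ) else 0)
    (htotal : ∀ x : X, (∀ n, f n x = 0) → x = 0)
    (hdense : Dense (Submodule.span ℝ (Set.range e) : Set X))
    (Cg : ℝ) (hCg1 : 1 ≤ Cg)
    (hproj : ∀ (A : Finset ℕ) (x : X), ‖∑ n ∈ A, f n x • e n‖ ≤ Cg * ‖x‖)
    (hsupp : ∀ (A : Finset ℕ) (x : X),
      ‖x - ∑ n ∈ A, f n x • e n‖ ≤ Cg * ‖x‖)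
    (hA : ∀ (D E : Finset ℕ), Disjoint D E → D.card ≤ E.card →
      ∀ ε δ : ℕ → ℝ, (∀ n ∈ D, |ε n| = 1) → (∀ n ∈ E, |δ n| = 1) →
      ∀ α β : ℝ, 0 ≤ α → α ≤ β →
      α * ‖∑ n ∈ D, ε n • e n‖ ≤ Cg * (β * ‖∑ n ∈ E, δ n • e n‖)) :
    ∀ (τ : ℝ), 0 < τ → τ ≤ 1 →
      ∀ (x : X) (m : ℕ) (B : Finset ℕ), B.card = m →
      (∀ i ∈ B, ∀ j ∉ B, τ * |f j x| ≤ |f i x|) →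
      ∀ (A : Finset ℕ) (a : ℕ → ℝ), A.card ≤ m →
      ‖x - ∑ n ∈ B, f n x • e n‖
        ≤ (Cg ^ 4 / τ + Cg) * ‖x - ∑ n ∈ A, a n • e n‖ :=
  stmt_18_general e f hbi Cg hproj hsupp hA
end

section
/- Let X be a Banach space with Markushevich basis, τ ∈ (0,1]. Suppose the basis is C_ℓ-suppression quasi-greedy with respect to τ-weak greedy sets (‖x − P_Λ(x)‖ ≤ C_ℓ‖x‖ for all τ-weak greedy sets Λ of x) and is C_sc-super-conservative: ‖1_{δB}‖ ≤ C_sc‖1_{εA}‖ whenever |A| = |B| and max B < min A. Then the basis has (τ C_ℓ + C_sc + C_ℓ C_sc)-left property (A, τ): for all x with ‖x‖_∞ ≤ 1/τ, finite sets A, B with |A| = |B|, max B < min A, A, B, supp(x) pairwise disjoint, and signs (ε), (δ), one has ‖τx + 1_{δB}‖ ≤ (τ C_ℓ + C_sc + C_ℓ C_sc)‖x + 1_{εA}‖. -/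
/-!
Put `y = x + 1_{εA}`. Since `x` vanishes on `A` and `|e_n^*(x)| ≤ 1/τ`, the set `A` is a `τ`-weak
greedy set of `y` with `P_A y = 1_{εA}`, so suppression quasi-greediness gives `‖x‖ ≤ C_ℓ‖y‖`.
Super-conservativity gives `‖1_{δB}‖ ≤ C_sc‖1_{εA}‖ ≤ C_sc(‖y‖ + ‖x‖)`, and the triangle
inequality `‖τx + 1_{δB}‖ ≤ τ‖x‖ + ‖1_{δB}‖` combines the two bounds.
-/

section

variable {X : Type*} [NormedAddCommGroup X] [NormedSpace ℝ X]

def IsWeakGreedySet (f : ℕ → X →L[ℝ] ℝ) (τ : ℝ) (x : X) (Λ : Finset ℕ) : Prop :=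
  ∀ i ∈ Λ, ∀ j ∉ Λ, τ * |f j x| ≤ |f i x|

def IsSuperConservative (e : ℕ → X) (C : ℝ) : Prop :=
  ∀ (A B : Finset ℕ), A.card = B.card → (∀ i ∈ B, ∀ j ∈ A, i < j) →
    ∀ ε δ : ℕ → ℝ, (∀ n ∈ A, |ε n| = 1) → (∀ n ∈ B, |δ n| = 1) →
      ‖∑ n ∈ B, δ n • e n‖ ≤ C * ‖∑ n ∈ A, ε n • e n‖

theorem IsSuperConservative.nonneg {e : ℕ → X} {C : ℝ} (h : IsSuperConservative e C)
    (he : e 0 ≠ 0) : 0 ≤ C := by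
  have h01 : ‖e 0‖ ≤ C * ‖e 1‖ := by
    simpa using h {1} {0} rfl (by simp) (fun _ => 1) (fun _ => 1) (by simp) (by simp)
  by_contra! hC
  have : C * ‖e 1‖ ≤ 0 := mul_nonpos_of_nonpos_of_nonneg hC.le (norm_nonneg _)
  exact he (norm_le_zero_iff.mp (h01.trans this))

theorem norm_smul_add_le_of_le_mul {x a b : X} {τ Cl Csc : ℝ} (hτ : 0 ≤ τ) (hCsc : 0 ≤ Csc)
    (hx : ‖x‖ ≤ Cl * ‖x + a‖) (hb : ‖b‖ ≤ Csc * ‖a‖) :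
    ‖τ • x + b‖ ≤ (τ * Cl + Csc + Cl * Csc) * ‖x + a‖ := by
  have ha : ‖a‖ ≤ ‖x + a‖ + ‖x‖ := by
    simpa using norm_sub_le (x + a) x
  calc ‖τ • x + b‖ ≤ τ * ‖x‖ + ‖b‖ := by
        simpa [norm_smul, abs_of_nonneg hτ] using norm_add_le (τ • x) b
    _ ≤ τ * (Cl * ‖x + a‖) + Csc * (‖x + a‖ + Cl * ‖x + a‖) := by
        gcongr
        exact hb.trans (mul_le_mul_of_nonneg_left (ha.trans (by gcongr)) hCsc)
    _ = (τ * Cl + Csc + Cl * Csc) * ‖x + a‖ := by ring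

variable {e : ℕ → X} {f : ℕ → X →L[ℝ] ℝ}

theorem apply_sum_smul_of_biorthogonal (hbi : ∀ i j, f i (e j) = if i = j then (1 : ℝ) else 0)
    (A : Finset ℕ) (c : ℕ → ℝ) (i : ℕ) :
    f i (∑ n ∈ A, c n • e n) = if i ∈ A then c i else 0 := by
  simp [map_sum, hbi]

theorem isWeakGreedySet_add_sum_smul (hbi : ∀ i j, f i (e j) = if i = j then (1 : ℝ) else 0)
    {τ : ℝ} (hτ : 0 < τ) {x : X} (hx : ∀ n, |f n x| ≤ 1 / τ) {A : Finset ℕ}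
    (hxA : ∀ n ∈ A, f n x = 0) {ε : ℕ → ℝ} (hε : ∀ n ∈ A, |ε n| = 1) :
    IsWeakGreedySet f τ (x + ∑ n ∈ A, ε n • e n) A := by
  intro i hi j hj
  simp only [map_add, apply_sum_smul_of_biorthogonal hbi, if_pos hi, if_neg hj, hxA i hi,
    zero_add, add_zero, hε i hi]
  calc τ * |f j x| ≤ τ * (1 / τ) := mul_le_mul_of_nonneg_left (hx j) hτ.le
    _ = 1 := by field_simp

theorem sum_apply_smul_add_sum_smul (hbi : ∀ i j, f i (e j) = if i = j then (1 : ℝ) else 0)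
    {x : X} {A : Finset ℕ} (hxA : ∀ n ∈ A, f n x = 0) (c : ℕ → ℝ) :
    ∑ n ∈ A, f n (x + ∑ m ∈ A, c m • e m) • e n = ∑ n ∈ A, c n • e n := by
  refine Finset.sum_congr rfl fun n hn => ?_
  rw [map_add, apply_sum_smul_of_biorthogonal hbi, if_pos hn, hxA n hn, zero_add]

end

theorem stmt_19_general
    {X : Type*} [NormedAddCommGroup X] [NormedSpace ℝ X]
    (e : ℕ → X) (f : ℕ → X →L[ℝ] ℝ)
    (hbi : ∀ i j, f i (e j) = if i = j then (1 : ℝ) else 0)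
    (τ : ℝ) (hτ : 0 < τ)
    (Cl Csc : ℝ)
    (hCl : ∀ (x : X) (Λ : Finset ℕ),
      (∀ i ∈ Λ, ∀ j ∉ Λ, τ * |f j x| ≤ |f i x|) →
      ‖x - ∑ n ∈ Λ, f n x • e n‖ ≤ Cl * ‖x‖)
    (hCsc : ∀ (A B : Finset ℕ), A.card = B.card →
      (∀ i ∈ B, ∀ j ∈ A, i < j) →
      ∀ ε δ : ℕ → ℝ, (∀ n ∈ A, |ε n| = 1) → (∀ n ∈ B, |δ n| = 1) →
      ‖∑ n ∈ B, δ n • e n‖ ≤ Csc * ‖∑ n ∈ A, ε n • e n‖) :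
    ∀ (x : X), (∀ n, |f n x| ≤ 1 / τ) →
      ∀ (A B : Finset ℕ), A.card = B.card →
      (∀ i ∈ B, ∀ j ∈ A, i < j) →
      (∀ n ∈ A, f n x = 0) → (∀ n ∈ B, f n x = 0) → Disjoint A B →
      ∀ ε δ : ℕ → ℝ, (∀ n ∈ A, |ε n| = 1) → (∀ n ∈ B, |δ n| = 1) →
      ‖τ • x + ∑ n ∈ B, δ n • e n‖
        ≤ (τ * Cl + Csc + Cl * Csc) * ‖x + ∑ n ∈ A, ε n • e n‖ := by
  intro x hx A B hcard hBA hxA _ _ ε δ hε hδ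
  have hgreedy := isWeakGreedySet_add_sum_smul hbi hτ hx hxA hε
  have hx_le : ‖x‖ ≤ Cl * ‖x + ∑ n ∈ A, ε n • e n‖ := by
    simpa only [sum_apply_smul_add_sum_smul hbi hxA, add_sub_cancel_right] using
      hCl _ A hgreedy
  have he0 : e 0 ≠ 0 := fun h => by simpa [h] using hbi 0 0
  exact norm_smul_add_le_of_le_mul hτ.le (IsSuperConservative.nonneg hCsc he0) hx_le
    (hCsc A B hcard hBA ε δ hε hδ)

/-- Lemma 4.10 (upper bound): a `(C_ℓ, τ)`-quasi-greedy and
`C_sc`-super-conservative basis has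
`(τC_ℓ + C_sc + C_ℓC_sc)`-left property (A, τ). -/
theorem stmt_19
    {X : Type*} [NormedAddCommGroup X] [NormedSpace ℝ X] [CompleteSpace X]
    (e : ℕ → X) (f : ℕ → X →L[ℝ] ℝ)
    (hbi : ∀ i j, f i (e j) = if i = j then (1 : ℝ) else 0)
    (htotal : ∀ x : X, (∀ n, f n x = 0) → x = 0)
    (hdense : Dense (Submodule.span ℝ (Set.range e) : Set X))
    (τ : ℝ) (hτ : 0 < τ) (hτ1 : τ ≤ 1)
    (Cl Csc : ℝ)
    (hCl : ∀ (x : X) (Λ : Finset ℕ),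
      (∀ i ∈ Λ, ∀ j ∉ Λ, τ * |f j x| ≤ |f i x|) →
      ‖x - ∑ n ∈ Λ, f n x • e n‖ ≤ Cl * ‖x‖)
    (hCsc : ∀ (A B : Finset ℕ), A.card = B.card →
      (∀ i ∈ B, ∀ j ∈ A, i < j) →
      ∀ ε δ : ℕ → ℝ, (∀ n ∈ A, |ε n| = 1) → (∀ n ∈ B, |δ n| = 1) →
      ‖∑ n ∈ B, δ n • e n‖ ≤ Csc * ‖∑ n ∈ A, ε n • e n‖) :
    ∀ (x : X), (∀ n, |f n x| ≤ 1 / τ) →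
      ∀ (A B : Finset ℕ), A.card = B.card →
      (∀ i ∈ B, ∀ j ∈ A, i < j) →
      (∀ n ∈ A, f n x = 0) → (∀ n ∈ B, f n x = 0) → Disjoint A B →
      ∀ ε δ : ℕ → ℝ, (∀ n ∈ A, |ε n| = 1) → (∀ n ∈ B, |δ n| = 1) →
      ‖τ • x + ∑ n ∈ B, δ n • e n‖
        ≤ (τ * Cl + Csc + Cl * Csc) * ‖x + ∑ n ∈ A, ε n • e n‖ :=
  stmt_19_general e f hbi τ hτ Cl Csc hCl hCsc
end
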